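/- Let r > 0, n ≥ 3 an integer, and 0 < D with D·sin(π/n) ≤ r. Define p_k = (D·cos(2πk/n), D·sin(2πk/n)) for k = 0, …, n−1. Then for every unit vector u ∈ ℝ² there exist k < n and t ≥ 0 such that ‖t·u − p_k‖ ≤ r; i.e., every ray emanating from the origin intersects the closed disk of radius r around some ring point. -/

import Mathlib

/-!
Write `u = (cos θ, sin θ)` and round `nθ/2π` to an integer: this picks a ring point `p_k` whose
angle differs from `θ` by at most `π/n` modulo `2π`, so `⟪u, p_k⟫ ≥ D cos (π/n) ≥ 0`. The foot
`t = ⟪u, p_k⟫` of the perpendicular from `p_k` to the ray then lies at distance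
`√(D² - ⟪u, p_k⟫²) ≤ D sin (π/n) ≤ r` from `p_k`.
-/

open Real

noncomputable def pt (a b : ℝ) : EuclideanSpace ℝ (Fin 2) := WithLp.toLp 2 ![a, b]

open scoped RealInnerProductSpace

section RayNearPoint

variable {E : Type*} [NormedAddCommGroup E] [InnerProductSpace ℝ E]

theorem norm_inner_smul_sub_sq {u : E} (hu : ‖u‖ = 1) (p : E) :
    ‖⟪u, p⟫ • u - p‖ ^ 2 = ‖p‖ ^ 2 - ⟪u, p⟫ ^ 2 := by
  rw [norm_sub_sq_real, norm_smul, real_inner_smul_left, hu, Real.norm_eq_abs, mul_one, sq_abs]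
  ring

theorem exists_nonneg_norm_smul_sub_le {u p : E} (hu : ‖u‖ = 1) {α : ℝ}
    (hα : α ∈ Set.Icc 0 (π / 2)) (hup : ‖p‖ * cos α ≤ ⟪u, p⟫) :
    ∃ t : ℝ, 0 ≤ t ∧ ‖t • u - p‖ ≤ ‖p‖ * sin α := by
  have hcos : 0 ≤ cos α := cos_nonneg_of_mem_Icc ⟨by linarith [hα.1, pi_pos], hα.2⟩
  have hsin : 0 ≤ sin α := sin_nonneg_of_nonneg_of_le_pi hα.1 (by linarith [hα.2, pi_pos])
  have hinner : 0 ≤ ⟪u, p⟫ := (mul_nonneg (norm_nonneg p) hcos).trans hup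
  refine ⟨⟪u, p⟫, hinner, ?_⟩
  refine le_of_sq_le_sq ?_ (mul_nonneg (norm_nonneg p) hsin)
  have hsq : (‖p‖ * cos α) ^ 2 ≤ ⟪u, p⟫ ^ 2 := by gcongr
  calc ‖⟪u, p⟫ • u - p‖ ^ 2 = ‖p‖ ^ 2 - ⟪u, p⟫ ^ 2 := norm_inner_smul_sub_sq hu p
    _ ≤ ‖p‖ ^ 2 - (‖p‖ * cos α) ^ 2 := by linarith
    _ = (‖p‖ * sin α) ^ 2 := by rw [mul_pow, mul_pow, sin_sq]; ring

end RayNearPoint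

theorem exists_cos_sin_eq_of_sq_add_sq_eq_one {a b : ℝ} (h : a ^ 2 + b ^ 2 = 1) :
    ∃ θ : ℝ, cos θ = a ∧ sin θ = b := by
  have hz : ‖(⟨a, b⟩ : ℂ)‖ = 1 := by
    rw [← pow_eq_one_iff_of_nonneg (norm_nonneg _) two_ne_zero, Complex.sq_norm, Complex.normSq_mk]
    linarith
  have hz0 : (⟨a, b⟩ : ℂ) ≠ 0 := by rintro h0; simp [h0] at hz
  exact ⟨Complex.arg ⟨a, b⟩, by simp [Complex.cos_arg hz0, hz], by simp [Complex.sin_arg, hz]⟩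

theorem inner_pt (u : EuclideanSpace ℝ (Fin 2)) (a b : ℝ) :
    ⟪u, pt a b⟫ = u 0 * a + u 1 * b := by
  simp only [pt, PiLp.inner_apply, RCLike.inner_apply, ringHom_apply, Fin.sum_univ_two,
    Fin.isValue, Matrix.cons_val_zero, Matrix.cons_val_one, Matrix.cons_val_fin_one]
  ring

theorem norm_pt_cos_sin {D : ℝ} (hD : 0 ≤ D) (φ : ℝ) : ‖pt (D * cos φ) (D * sin φ)‖ = D := by
  rw [EuclideanSpace.norm_eq, Fin.sum_univ_two]
  simp [pt, mul_pow, ← mul_add, sqrt_sq hD]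

theorem exists_unit_eq_cos_sin {u : EuclideanSpace ℝ (Fin 2)} (hu : ‖u‖ = 1) :
    ∃ θ : ℝ, cos θ = u 0 ∧ sin θ = u 1 := by
  apply exists_cos_sin_eq_of_sq_add_sq_eq_one
  have := EuclideanSpace.norm_sq_eq u
  simpa [hu, Fin.sum_univ_two] using this.symm

theorem exists_int_abs_sub_two_pi_mul_div_le {n : ℕ} (hn : 0 < n) (θ : ℝ) :
    ∃ m : ℤ, |θ - 2 * π * m / n| ≤ π / n := by
  refine ⟨round (n * θ / (2 * π)), ?_⟩
  have hn' : (0 : ℝ) < n := by exact_mod_cast hn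
  have hsplit : θ - 2 * π * round (n * θ / (2 * π)) / n
      = 2 * π / n * (n * θ / (2 * π) - round (n * θ / (2 * π))) := by
    field_simp
  calc |θ - 2 * π * round (n * θ / (2 * π)) / n|
      = 2 * π / n * |n * θ / (2 * π) - round (n * θ / (2 * π))| := by
        rw [hsplit, abs_mul, abs_of_pos (by positivity)]
    _ ≤ 2 * π / n * (1 / 2) := by gcongr; exact abs_sub_round _
    _ = π / n := by ring

theorem exists_fin_two_pi_mul_div_eq {n : ℕ} (hn : 0 < n) (m : ℤ) :
    ∃ k : Fin n, ∃ j : ℤ, 2 * π * k / n = 2 * π * m / n - j * (2 * π) := by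
  have hn' : (n : ℤ) ≠ 0 := by exact_mod_cast hn.ne'
  have hmod : 0 ≤ m % n := Int.emod_nonneg m hn'
  have hlt : m % n < n := Int.emod_lt_of_pos m (by exact_mod_cast hn)
  refine ⟨⟨(m % n).toNat, by omega⟩, m / n, ?_⟩
  have hk : (((m % n).toNat : ℕ) : ℝ) = m - n * (m / n : ℤ) := by
    rw [← Int.cast_natCast, Int.toNat_of_nonneg hmod, Int.emod_def]
    push_cast; ring
  simp only [hk]
  field_simp

theorem exists_fin_cos_div_le_cos_sub {n : ℕ} (hn : 0 < n) (θ : ℝ) :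
    ∃ k : Fin n, cos (π / n) ≤ cos (θ - 2 * π * k / n) := by
  obtain ⟨m, hm⟩ := exists_int_abs_sub_two_pi_mul_div_le hn θ
  obtain ⟨k, j, hk⟩ := exists_fin_two_pi_mul_div_eq hn m
  refine ⟨k, ?_⟩
  have hn1 : (1 : ℝ) ≤ n := by exact_mod_cast hn
  rw [hk, ← sub_add, cos_add_int_mul_two_pi, ← cos_abs (θ - _)]
  exact cos_le_cos_of_nonneg_of_le_pi (abs_nonneg _) (div_le_self pi_pos.le hn1) hm

theorem center_robot_always_sees_ring_general (r : ℝ) (n : ℕ) (hn : 3 ≤ n)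
    (D : ℝ) (hD : 0 < D) (hDr : D * Real.sin (π / n) ≤ r) :
    ∀ u : EuclideanSpace ℝ (Fin 2), ‖u‖ = 1 →
      ∃ k : Fin n, ∃ t : ℝ, 0 ≤ t ∧
        ‖t • u - pt (D * Real.cos (2 * π * k / n)) (D * Real.sin (2 * π * k / n))‖ ≤ r := by
  intro u hu
  obtain ⟨θ, hθcos, hθsin⟩ := exists_unit_eq_cos_sin hu
  obtain ⟨k, hk⟩ := exists_fin_cos_div_le_cos_sub (by omega : 0 < n) θ
  have hn2 : (2 : ℝ) ≤ n := by exact_mod_cast (by omega : 2 ≤ n)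
  have hangle : π / n ∈ Set.Icc 0 (π / 2) :=
    ⟨by positivity, div_le_div_of_nonneg_left pi_pos.le two_pos hn2⟩
  set p := pt (D * cos (2 * π * k / n)) (D * sin (2 * π * k / n))
  have hp : ‖p‖ = D := norm_pt_cos_sin hD.le _
  have hinner : ⟪u, p⟫ = D * cos (θ - 2 * π * k / n) := by
    rw [inner_pt, ← hθcos, ← hθsin, cos_sub]; ring
  have hup : ‖p‖ * cos (π / n) ≤ ⟪u, p⟫ := by
    rw [hp, hinner]; exact mul_le_mul_of_nonneg_left hk hD.le
  obtain ⟨t, ht, hdist⟩ := exists_nonneg_norm_smul_sub_le hu hangle hup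
  exact ⟨k, t, ht, hdist.trans (hp ▸ hDr)⟩

/-- In the bot-in-the-middle counterexample, if the `n ≥ 3` ring points at radius `D` satisfy
`D·sin(π/n) ≤ r`, then every ray from the origin meets the closed disk of radius `r`
around some ring point: the central robot always sees some ring robot. -/
theorem center_robot_always_sees_ring (r : ℝ) (hr : 0 < r) (n : ℕ) (hn : 3 ≤ n)
    (D : ℝ) (hD : 0 < D) (hDr : D * Real.sin (π / n) ≤ r) :
    ∀ u : EuclideanSpace ℝ (Fin 2), ‖u‖ = 1 →
      ∃ k : Fin n, ∃ t : ℝ, 0 ≤ t ∧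
        ‖t • u - pt (D * Real.cos (2 * π * k / n)) (D * Real.sin (2 * π * k / n))‖ ≤ r :=
  center_robot_always_sees_ring_general r n hn D hD hDr
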